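/- arXiv:1110.5468 — 6 statements merged into one kernel-verified Lean document; each statement's English description precedes it below -/
import Mathlib

section
/- In the first Weyl algebra A_1 over a field K of characteristic 0, for any non-constant polynomial f ∈ K[x], the multiplicative set S = {f^i : i ∈ ℕ} satisfies the right Ore condition: for every g ∈ A_1 and every f^k ∈ S, there exist f^ℓ ∈ S and h ∈ A_1 such that g · f^ℓ = f^k · h. -/
/-!
`x` commutes with `f`, and `∂ f^(k+1) = f^k (f ∂ + (k+1) f')` because differentiating `f^(k+1)`
leaves a factor `f^k`. Since the elements satisfying the right Ore condition with respect to the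
powers of `f` form a subalgebra, it suffices to check these two generators.
-/

open Polynomial

namespace Subalgebra

variable {R B : Type*} [CommSemiring R] [Semiring B] [Algebra R B]

def rightOrePowers (A : Subalgebra R B) {s : B} (hs : s ∈ A) : Subalgebra R B where
  carrier := {g | ∀ k : ℕ, ∃ ℓ : ℕ, ∃ h ∈ A, g * s ^ ℓ = s ^ k * h}
  algebraMap_mem' r k := ⟨k, algebraMap R B r, A.algebraMap_mem r, Algebra.commutes r _⟩
  add_mem' {x y} hx hy k := by
    obtain ⟨ℓ₁, h₁, h₁A, e₁⟩ := hx k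
    obtain ⟨ℓ₂, h₂, h₂A, e₂⟩ := hy k
    refine ⟨ℓ₁ + ℓ₂, h₁ * s ^ ℓ₂ + h₂ * s ^ ℓ₁,
      add_mem (mul_mem h₁A (pow_mem hs _)) (mul_mem h₂A (pow_mem hs _)), ?_⟩
    calc (x + y) * s ^ (ℓ₁ + ℓ₂) = x * s ^ ℓ₁ * s ^ ℓ₂ + y * s ^ ℓ₂ * s ^ ℓ₁ := by
          rw [add_mul, pow_add, ← mul_assoc, ← pow_mul_comm, ← mul_assoc]
      _ = s ^ k * (h₁ * s ^ ℓ₂ + h₂ * s ^ ℓ₁) := by rw [e₁, e₂, mul_add, mul_assoc, mul_assoc]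
  mul_mem' {x y} hx hy k := by
    obtain ⟨ℓ₁, h₁, h₁A, e₁⟩ := hx k
    obtain ⟨ℓ₂, h₂, h₂A, e₂⟩ := hy ℓ₁
    refine ⟨ℓ₂, h₁ * h₂, mul_mem h₁A h₂A, ?_⟩
    rw [mul_assoc, e₂, ← mul_assoc, e₁, mul_assoc]

theorem mem_rightOrePowers {A : Subalgebra R B} {s : B} (hs : s ∈ A) {g : B} :
    g ∈ A.rightOrePowers hs ↔ ∀ k : ℕ, ∃ ℓ : ℕ, ∃ h ∈ A, g * s ^ ℓ = s ^ k * h :=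
  Iff.rfl

end Subalgebra

namespace Polynomial

variable {R : Type*} [CommSemiring R]

theorem mulLeft_mem_adjoin_mulLeft_X (D : Module.End R R[X]) (p : R[X]) :
    LinearMap.mulLeft R p ∈ Algebra.adjoin R {LinearMap.mulLeft R X, D} := by
  have hp : LinearMap.mulLeft R p = aeval (LinearMap.mulLeft R (X : R[X])) p := by
    have h := aeval_algHom_apply (Algebra.lmul R R[X]) X p
    rw [aeval_X_left_apply] at h
    exact h.symm
  rw [hp]
  exact Algebra.adjoin_mono (Set.singleton_subset_iff.2 (Set.mem_insert _ _))
    (aeval_mem_adjoin_singleton R _)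

theorem derivative_mul_mulLeft (p : R[X]) :
    (derivative : Module.End R R[X]) * LinearMap.mulLeft R p
      = LinearMap.mulLeft R p * derivative + LinearMap.mulLeft R (derivative p) := by
  ext q
  simp [derivative_mul, add_comm]

theorem derivative_mul_mulLeft_pow_succ (f : R[X]) (k : ℕ) :
    (derivative : Module.End R R[X]) * LinearMap.mulLeft R (f ^ (k + 1))
      = LinearMap.mulLeft R (f ^ k) * (LinearMap.mulLeft R f * derivative
          + LinearMap.mulLeft R (C (k + 1 : R) * derivative f)) := by
  rw [derivative_mul_mulLeft, derivative_pow_succ, mul_add, ← mul_assoc,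
    Module.End.mul_eq_comp (LinearMap.mulLeft R (f ^ k)), ← LinearMap.mulLeft_mul, ← pow_succ,
    Module.End.mul_eq_comp (LinearMap.mulLeft R (f ^ k)), ← LinearMap.mulLeft_mul]
  congr 2
  ring

end Polynomial

theorem weyl_powers_right_ore_general
    {K : Type*} [Field K]
    (f : Polynomial K)
    (xop dop : Module.End K (Polynomial K))
    (hxop : xop = LinearMap.mulLeft K (Polynomial.X : Polynomial K))
    (hdop : dop = (Polynomial.derivative : Polynomial K →ₗ[K] Polynomial K)) :
    ∀ g ∈ Algebra.adjoin K {xop, dop}, ∀ k : ℕ,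
      ∃ ℓ : ℕ, ∃ h ∈ Algebra.adjoin K {xop, dop},
        g * LinearMap.mulLeft K (f ^ ℓ) = LinearMap.mulLeft K (f ^ k) * h := by
  subst hxop hdop
  set A := Algebra.adjoin K {LinearMap.mulLeft K (X : K[X]), (derivative : Module.End K K[X])}
  have hfA := mulLeft_mem_adjoin_mulLeft_X derivative f
  have hAle : A ≤ A.rightOrePowers hfA := by
    refine Algebra.adjoin_le ?_
    rintro _ (rfl | rfl) k
    · exact ⟨k, LinearMap.mulLeft K X, Algebra.subset_adjoin (Set.mem_insert _ _),
        (((Commute.all X f).map (Algebra.lmul K K[X])).pow_right k).eq⟩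
    · refine ⟨k + 1, LinearMap.mulLeft K f * derivative
          + LinearMap.mulLeft K (C (k + 1 : K) * derivative f), ?_, ?_⟩
      · exact add_mem (mul_mem hfA (Algebra.subset_adjoin (Set.mem_insert_of_mem _ rfl)))
          (mulLeft_mem_adjoin_mulLeft_X _ _)
      · simpa only [LinearMap.pow_mulLeft] using derivative_mul_mulLeft_pow_succ f k
  intro g hg k
  simpa only [LinearMap.pow_mulLeft] using (Subalgebra.mem_rightOrePowers hfA).1 (hAle hg) k

/-- In the first Weyl algebra `A₁` over a field of characteristic `0`, realized
faithfully as the subalgebra of `End_K(K[x])` generated by `x` (multiplication by `X`) and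
`∂` (differentiation), for any non-constant `f ∈ K[x]` the multiplicative set
`S = {f^i : i ∈ ℕ}` satisfies the right Ore condition: for every `g ∈ A₁` and every `f^k ∈ S`
there exist `f^ℓ ∈ S` and `h ∈ A₁` with `g · f^ℓ = f^k · h`. -/
theorem weyl_powers_right_ore
    {K : Type*} [Field K] [CharZero K]
    (f : Polynomial K) (hf : f.natDegree ≠ 0)
    (xop dop : Module.End K (Polynomial K))
    (hxop : xop = LinearMap.mulLeft K (Polynomial.X : Polynomial K))
    (hdop : dop = (Polynomial.derivative : Polynomial K →ₗ[K] Polynomial K)) :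
    ∀ g ∈ Algebra.adjoin K {xop, dop}, ∀ k : ℕ,
      ∃ ℓ : ℕ, ∃ h ∈ Algebra.adjoin K {xop, dop},
        g * LinearMap.mulLeft K (f ^ ℓ) = LinearMap.mulLeft K (f ^ k) * h :=
  weyl_powers_right_ore_general f xop dop hxop hdop
end

section
/- In the first shift algebra S_1 = K⟨x,s | sx = xs + s⟩, for any non-constant polynomial f ∈ K[x], the set S = {f^n : n ∈ ℕ} is NOT a right Ore set: there exist g ∈ S_1 (e.g. g = s) and an element f^k ∈ S such that for no t ∈ S_1 and f^ℓ ∈ S does g · f^ℓ = f^k · t hold. -/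
/-!
Apply a hypothetical identity `s · f^ℓ = f · t` to the constant polynomial `1`: it gives
`f ∣ f(x+1)^ℓ`. Then the roots of `f` in an algebraic closure are stable under `a ↦ a + 1`,
so in characteristic zero a single root produces infinitely many, which is absurd.
-/

open Polynomial

namespace Polynomial

variable {R : Type*} [CommRing R] [IsDomain R]

theorem isRoot_add_one_of_dvd_comp_pow {p : R[X]} {ℓ : ℕ} (hdvd : p ∣ (p.comp (X + 1)) ^ ℓ)
    {a : R} (ha : p.IsRoot a) : p.IsRoot (a + 1) := by
  obtain ⟨r, hr⟩ := hdvd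
  have hpow : (p.eval (a + 1)) ^ ℓ = 0 := by
    simpa [eval_comp, ha.eq_zero] using congr_arg (eval a) hr
  exact eq_zero_of_pow_eq_zero hpow

theorem eq_zero_of_isRoot_of_forall_isRoot_add_one [CharZero R] {p : R[X]} {a : R}
    (ha : p.IsRoot a) (hstep : ∀ b, p.IsRoot b → p.IsRoot (b + 1)) : p = 0 := by
  have hroots : ∀ n : ℕ, p.IsRoot (a + n) := by
    intro n
    induction n with
    | zero => simpa using ha
    | succ n ih => simpa [add_assoc] using hstep _ ih
  refine eq_zero_of_infinite_isRoot p (Set.infinite_of_injective_forall_mem ?_ hroots)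
  intro m n hmn
  exact Nat.cast_injective (add_left_cancel hmn)

theorem not_dvd_comp_add_one_pow {K : Type*} [Field K] [CharZero K] {f : K[X]}
    (hf : f.natDegree ≠ 0) (ℓ : ℕ) : ¬ f ∣ (f.comp (X + 1)) ^ ℓ := by
  intro hdvd
  set p := f.map (algebraMap K (AlgebraicClosure K))
  have hp : p ≠ 0 := map_ne_zero (ne_zero_of_natDegree_gt (Nat.pos_of_ne_zero hf))
  obtain ⟨a, ha⟩ := IsAlgClosed.exists_root p (by
    rw [degree_map]
    exact fun h => hf (natDegree_eq_of_degree_eq_some h))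
  have hdvd' : p ∣ (p.comp (X + 1)) ^ ℓ := by
    simpa [p, map_comp] using Polynomial.map_dvd (algebraMap K (AlgebraicClosure K)) hdvd
  exact hp (eq_zero_of_isRoot_of_forall_isRoot_add_one ha
    fun b hb => isRoot_add_one_of_dvd_comp_pow hdvd' hb)

end Polynomial

theorem shift_powers_not_ore_general
    {K : Type*} [Field K] [CharZero K]
    (f : Polynomial K) (hf : f.natDegree ≠ 0)
    (xop sop : Module.End K (Polynomial K))
    (hsop : sop = (Polynomial.aeval (Polynomial.X + 1 : Polynomial K) :
        Polynomial K →ₐ[K] Polynomial K).toLinearMap) :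
    ∃ g ∈ Algebra.adjoin K {xop, sop}, ∃ k : ℕ,
      ∀ t ∈ Algebra.adjoin K {xop, sop}, ∀ ℓ : ℕ,
        g * LinearMap.mulLeft K (f ^ ℓ) ≠ LinearMap.mulLeft K (f ^ k) * t := by
  refine ⟨sop, Algebra.subset_adjoin (by simp), 1, fun t _ ℓ heq => ?_⟩
  have hone := LinearMap.congr_fun heq 1
  simp only [Module.End.mul_apply, LinearMap.mulLeft_apply, mul_one, pow_one, hsop,
    AlgHom.toLinearMap_apply, map_pow, ← comp_eq_aeval] at hone
  exact not_dvd_comp_add_one_pow hf ℓ ⟨t 1, hone⟩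

/-- In the first shift algebra `S₁ = K⟨x,s | sx = (x+1)s⟩` (realized faithfully as
the subalgebra of `End_K(K[x])` generated by multiplication by `X` and the shift operator
`p(X) ↦ p(X+1)`), for any non-constant `f ∈ K[x]` the set `S = {fⁿ : n ∈ ℕ}` is NOT a right Ore
set: there exist `g ∈ S₁` (e.g. `g = s`) and `f^k ∈ S` such that no `t ∈ S₁` and `f^ℓ ∈ S`
satisfy `g · f^ℓ = f^k · t`. -/
theorem shift_powers_not_ore
    {K : Type*} [Field K] [CharZero K]
    (f : Polynomial K) (hf : f.natDegree ≠ 0)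
    (xop sop : Module.End K (Polynomial K))
    (hxop : xop = LinearMap.mulLeft K (Polynomial.X : Polynomial K))
    (hsop : sop = (Polynomial.aeval (Polynomial.X + 1 : Polynomial K) :
        Polynomial K →ₐ[K] Polynomial K).toLinearMap) :
    ∃ g ∈ Algebra.adjoin K {xop, sop}, ∃ k : ℕ,
      ∀ t ∈ Algebra.adjoin K {xop, sop}, ∀ ℓ : ℕ,
        g * LinearMap.mulLeft K (f ^ ℓ) ≠ LinearMap.mulLeft K (f ^ k) * t :=
  shift_powers_not_ore_general f hf xop sop hsop
end

section
/- Let R be a noncommutative domain and a K-algebra, and let S = R ⊗_K R^{opp} be its enveloping algebra, assumed to be a domain. Let r ∈ R be a proper two-sided element (i.e., r ≠ 0, Rr = rR, and Rr ⊊ R). Then for natural numbers m ≤ n with m ≥ 1, the two-sided ideals ⟨r^n⟩ and ⟨r^{m+n}⟩ of R are distinct; consequently the R-modules R²/R²·Diag(r^m, r^n) and R²/R²·Diag(1, r^{m+n}) are not isomorphic. -/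
/-!
Two-sidedness of `r` lets every power `rⁿ` be moved past ring elements, `rⁿx ∈ Rrⁿ`, and as
`Rrⁿ ⊆ Rrᵐ` for `m ≤ n`, `rⁿ` annihilates `R²/R²·Diag(rᵐ, rⁿ)`. In `R²/R²·Diag(1, r^{m+n})` it
does not kill the second basis vector: `rⁿ = a r^{m+n}` would give `a rᵐ = 1` after cancelling
`rⁿ`, making `r` left invertible, against `Rr ≠ R`. Since annihilators are invariant under
isomorphism, the two cokernels are not isomorphic.
-/

open Matrix

section Monoid

variable {M : Type*} [Monoid M] {r : M}

theorem range_pow_mul_subset_range_mul_pow (h : Set.range (r * ·) ⊆ Set.range (· * r)) (k : ℕ) :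
    Set.range (r ^ k * ·) ⊆ Set.range (· * r ^ k) := by
  induction k with
  | zero => rintro _ ⟨x, rfl⟩; exact ⟨x, by simp⟩
  | succ k ih =>
    rintro _ ⟨x, rfl⟩
    obtain ⟨y, hy⟩ := h ⟨x, rfl⟩
    obtain ⟨z, hz⟩ := ih ⟨y, rfl⟩
    refine ⟨z, ?_⟩
    simp only at hy hz ⊢
    calc z * r ^ (k + 1) = z * r ^ k * r := by rw [pow_succ, mul_assoc]
      _ = r ^ k * (y * r) := by rw [hz, mul_assoc]
      _ = r ^ (k + 1) * x := by rw [hy, ← mul_assoc, ← pow_succ]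

theorem mul_pow_ne_one_of_range_mul_ne_univ (hproper : Set.range (· * r) ≠ Set.univ) {k : ℕ}
    (hk : k ≠ 0) (b : M) : b * r ^ k ≠ 1 := by
  intro hb
  refine hproper (Set.eq_univ_of_forall fun a => ⟨a * (b * r ^ (k - 1)), ?_⟩)
  simp only
  rw [mul_assoc, mul_assoc, ← pow_succ, Nat.sub_add_cancel (Nat.one_le_iff_ne_zero.2 hk), hb,
    mul_one]

theorem pow_notMem_range_mul_pow_add (hr : IsRightRegular r)
    (hproper : Set.range (· * r) ≠ Set.univ) {m : ℕ} (hm : m ≠ 0) (n : ℕ) :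
    r ^ n ∉ Set.range (· * r ^ (m + n)) := by
  rintro ⟨a, ha⟩
  refine mul_pow_ne_one_of_range_mul_ne_univ hproper hm a (hr.pow n ?_)
  simp only at ha ⊢
  rw [mul_assoc, ← pow_add, ha, one_mul]

end Monoid

namespace Matrix

variable {ι R : Type*} [Fintype ι] [DecidableEq ι]

theorem mem_span_range_diagonal_iff [Semiring R] {d : ι → R} {v : ι → R} :
    v ∈ Submodule.span R (Set.range fun i => diagonal d i) ↔ ∀ i, v i ∈ Set.range (· * d i) := by
  rw [Submodule.mem_span_range_iff_exists_fun]
  have hsum (c : ι → R) : ∑ i, c i • diagonal d i = fun j => c j * d j := by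
    ext j
    simp [diagonal_apply, Finset.sum_apply]
  simp only [hsum, funext_iff]
  exact ⟨fun ⟨c, hc⟩ i => ⟨c i, hc i⟩, fun h => ⟨fun i => (h i).choose, fun i => (h i).choose_spec⟩⟩

theorem mem_annihilator_quotient_span_diagonal_iff [Ring R] {d : ι → R} {a : R} :
    a ∈ Module.annihilator R ((ι → R) ⧸ Submodule.span R (Set.range fun i => diagonal d i)) ↔
      ∀ i x, a * x ∈ Set.range (· * d i) := by
  simp only [Submodule.annihilator_quotient, Submodule.mem_colon, Set.mem_univ, true_implies,
    mem_span_range_diagonal_iff, Pi.smul_apply, smul_eq_mul]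
  refine ⟨fun h i x => ?_, fun h v i => h i (v i)⟩
  simpa using h (Pi.single i x) i

end Matrix

theorem diag_powers_not_isomorphic_general
    {R : Type*} [Ring R] [IsDomain R]
    (r : R) (hr0 : r ≠ 0)
    (htwosided : Set.range (fun a : R => a * r) = Set.range (fun a : R => r * a))
    (hproper : Set.range (fun a : R => a * r) ≠ Set.univ)
    (m n : ℕ) (hm : 1 ≤ m) (hmn : m ≤ n) :
    Set.range (fun a : R => a * r ^ n) ≠ Set.range (fun a : R => a * r ^ (m + n)) ∧
    IsEmpty
      (((Fin 2 → R) ⧸ Submodule.span R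
          (Set.range fun i => Matrix.diagonal ![r ^ m, r ^ n] i))
        ≃ₗ[R]
       ((Fin 2 → R) ⧸ Submodule.span R
          (Set.range fun i => Matrix.diagonal ![(1 : R), r ^ (m + n)] i))) := by
  have hnot := pow_notMem_range_mul_pow_add (IsRegular.of_ne_zero hr0).right hproper
    (Nat.one_le_iff_ne_zero.1 hm) n
  refine ⟨fun h => hnot (h ▸ ⟨1, one_mul _⟩), ⟨fun e => hnot ?_⟩⟩
  have hpow := range_pow_mul_subset_range_mul_pow htwosided.ge n
  have hann : r ^ n ∈ Module.annihilator R
      ((Fin 2 → R) ⧸ Submodule.span R (Set.range fun i => diagonal ![r ^ m, r ^ n] i)) := by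
    rw [mem_annihilator_quotient_span_diagonal_iff, Fin.forall_fin_two]
    refine ⟨fun x => ?_, fun x => hpow ⟨x, rfl⟩⟩
    obtain ⟨y, hy⟩ := hpow ⟨x, rfl⟩
    refine ⟨y * r ^ (n - m), ?_⟩
    simp only [cons_val_zero] at hy ⊢
    rw [mul_assoc, ← pow_add, Nat.sub_add_cancel hmn, hy]
  rw [e.annihilator_eq, mem_annihilator_quotient_span_diagonal_iff] at hann
  simpa using hann 1 1

/-- Let `R` be a noncommutative domain and `K`-algebra whose enveloping algebra
`S = R ⊗_K Rᵒᵖ` is a domain, and let `r ∈ R` be a proper two-sided element (`r ≠ 0`,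
`Rr = rR`, `Rr ⊊ R`). Then for `1 ≤ m ≤ n` the two-sided ideals `⟨rⁿ⟩ = Rrⁿ` and
`⟨r^{m+n}⟩ = Rr^{m+n}` are distinct, and the left modules `R²/R²·Diag(r^m, r^n)` and
`R²/R²·Diag(1, r^{m+n})` (cokernels, i.e. quotients by the span of the rows) are not
isomorphic. -/
theorem diag_powers_not_isomorphic
    {K R : Type*} [Field K] [Ring R] [IsDomain R] [Algebra K R]
    [IsDomain (TensorProduct K R Rᵐᵒᵖ)]
    (r : R) (hr0 : r ≠ 0)
    (htwosided : Set.range (fun a : R => a * r) = Set.range (fun a : R => r * a))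
    (hproper : Set.range (fun a : R => a * r) ≠ Set.univ)
    (m n : ℕ) (hm : 1 ≤ m) (hmn : m ≤ n) :
    Set.range (fun a : R => a * r ^ n) ≠ Set.range (fun a : R => a * r ^ (m + n)) ∧
    IsEmpty
      (((Fin 2 → R) ⧸ Submodule.span R
          (Set.range fun i => Matrix.diagonal ![r ^ m, r ^ n] i))
        ≃ₗ[R]
       ((Fin 2 → R) ⧸ Submodule.span R
          (Set.range fun i => Matrix.diagonal ![(1 : R), r ^ (m + n)] i))) :=
  diag_powers_not_isomorphic_general r hr0 htwosided hproper m n hm hmn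
end

section
/- Let M ∈ R^{p×p} be a full-rank matrix over an Ore domain R, and U_* ∈ R_*^{ℓ×p} a matrix with U_* M_* = G, a Gröbner basis matrix of the row module. Select rows t_1,...,t_p of U_* so that the corresponding rows of U_*M_* form a generating set B of the R-row-module of M, with B a square matrix of full rank. Then U = [rows t_1,...,t_p of U_*] is invertible over R (i.e., there exists V ∈ R^{p×p} with VU = UV = Id). -/
/-!
Write `U` for the selected rows of `U_*`, so that `B = U M`. Since the rows of `M` lie in the row
module of `B`, there is `V` with `V B = M`, i.e. `(V U) M = M`; left cancellation of `M` gives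
`V U = 1`. Then `(U V) B = U (V U) M = B`, and left cancellation of `B` gives `U V = 1`.
-/

namespace Matrix

variable {R : Type*} {l m n : Type*} [Fintype m]

theorem eq_of_mul_eq_mul_of_vecMul_eq_zero [Ring R] {A : Matrix m n R}
    (hA : ∀ v : m → R, v ᵥ* A = 0 → v = 0) {X Y : Matrix l m R} (h : X * A = Y * A) :
    X = Y := by
  funext i
  refine sub_eq_zero.mp (hA _ ?_)
  rw [sub_vecMul, ← mul_apply_eq_vecMul, ← mul_apply_eq_vecMul, h, sub_self]

theorem exists_mul_eq_of_span_row_le [Semiring R] {A : Matrix l n R} {B : Matrix m n R}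
    (h : Submodule.span R (Set.range A.row) ≤ Submodule.span R (Set.range B.row)) :
    ∃ V : Matrix l m R, V * B = A := by
  have hrow (i : l) : ∃ v : m → R, v ᵥ* B = A i := by
    rw [← range_vecMulLinear B] at h
    exact h (Submodule.subset_span ⟨i, rfl⟩)
  choose V hV using hrow
  exact ⟨of V, funext fun i => (mul_apply_eq_vecMul _ _ i).trans (hV i)⟩

theorem exists_inverse_of_span_row_le_span_row_mul [Ring R] [DecidableEq m] {U M : Matrix m m R}
    (hM : ∀ v : m → R, v ᵥ* M = 0 → v = 0) (hUM : ∀ v : m → R, v ᵥ* (U * M) = 0 → v = 0)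
    (hspan : Submodule.span R (Set.range M.row) ≤ Submodule.span R (Set.range (U * M).row)) :
    ∃ V : Matrix m m R, V * U = 1 ∧ U * V = 1 := by
  obtain ⟨V, hV⟩ := exists_mul_eq_of_span_row_le hspan
  have hVU : V * U = 1 :=
    eq_of_mul_eq_mul_of_vecMul_eq_zero hM (by rw [Matrix.mul_assoc, hV, Matrix.one_mul])
  refine ⟨V, hVU, eq_of_mul_eq_mul_of_vecMul_eq_zero hUM ?_⟩
  rw [Matrix.mul_assoc, ← Matrix.mul_assoc V, hVU, Matrix.one_mul, Matrix.one_mul]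

end Matrix

theorem selected_transformation_matrix_invertible_general
    {R : Type*} [Ring R] {l p : ℕ}
    (Ustar : Matrix (Fin l) (Fin p) R) (Mstar : Matrix (Fin p) (Fin p) R)
    (t : Fin p → Fin l)
    (hrankM : ∀ v : Fin p → R, Matrix.vecMul v Mstar = 0 → v = 0)
    (hrankB : ∀ v : Fin p → R, Matrix.vecMul v ((Ustar * Mstar).submatrix t id) = 0 → v = 0)
    (hgen : Submodule.span R (Set.range fun i => (Ustar * Mstar).submatrix t id i)
        = Submodule.span R (Set.range fun i => Mstar i)) :
    ∃ V : Matrix (Fin p) (Fin p) R,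
      V * Ustar.submatrix t id = 1 ∧ Ustar.submatrix t id * V = 1 := by
  have hB : (Ustar * Mstar).submatrix t id = Ustar.submatrix t id * Mstar := rfl
  rw [hB] at hrankB hgen
  exact Matrix.exists_inverse_of_span_row_le_span_row_mul hrankM hrankB hgen.ge

/-- Let `R` be a Noetherian Ore domain, `M_* ∈ R^{p×p}` a full-rank matrix (its
rows are left linearly independent), and `U_* ∈ R^{ℓ×p}` with `U_* M_*` a Gröbner basis matrix
of the row module.  Select row indices `t₁,…,t_p` such that the corresponding rows
`B = (U_* M_*).submatrix t id` form a square full-rank matrix whose rows generate the same left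
row module as the rows of `M_*`.  Then `U := U_*.submatrix t id` is invertible over `R`: there
is `V` with `V·U = U·V = 1`. -/
theorem selected_transformation_matrix_invertible
    {R : Type*} [Ring R] [IsDomain R] [IsNoetherianRing R] {l p : ℕ}
    (Ustar : Matrix (Fin l) (Fin p) R) (Mstar : Matrix (Fin p) (Fin p) R)
    (t : Fin p → Fin l)
    (hrankM : ∀ v : Fin p → R, Matrix.vecMul v Mstar = 0 → v = 0)
    (hrankB : ∀ v : Fin p → R, Matrix.vecMul v ((Ustar * Mstar).submatrix t id) = 0 → v = 0)
    (hgen : Submodule.span R (Set.range fun i => (Ustar * Mstar).submatrix t id i)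
        = Submodule.span R (Set.range fun i => Mstar i)) :
    ∃ V : Matrix (Fin p) (Fin p) R,
      V * Ustar.submatrix t id = 1 ∧ Ustar.submatrix t id * V = 1 :=
  selected_transformation_matrix_invertible_general Ustar Mstar t hrankM hrankB hgen
end

section
/- Let R be a simple Euclidean Ore domain of the form A[∂;σ,δ] with A a division ring, and M = Diag(m_1,...,m_r) with all m_i ≠ 0. Then the left R-module R^r/R^r·M has dimension d = Σ deg(m_i) as a left A-vector space. If p ∈ R^{r×1} is a column vector and c ∈ R generates the left annihilator ideal {f ∈ R : f·p ∈ R^r·M}, and deg(c) = d, then R^r/R^r·M ≅ R/Rc; i.e., Diag(1,...,1,c) is a Jacobson form of M. -/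
/-!
Since `M` is diagonal, `R^r/R^r·M ≅ ⊕ᵢ R/Rmᵢ`, whose `A`-dimension is `Σ deg mᵢ = d`. The class
of `p` generates a copy of `R/Rc` inside it, of the same finite `A`-dimension `deg c = d`, so the
embedding `R/Rc → R^r/R^r·M` is onto.
-/

universe u v

open Cardinal in
theorem Cardinal.sum_natCast {ι : Type v} [Fintype ι] (d : ι → ℕ) :
    (sum fun i => (d i : Cardinal.{u})) = ((∑ i, d i : ℕ) : Cardinal) := by
  have h : ∀ i, (d i : Cardinal.{u}) = #(ULift (Fin (d i))) := fun i => by simp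
  simp_rw [h, ← mk_sigma, mk_fintype, Fintype.card_sigma]
  simp

theorem Submodule.span_range_single {R ι : Type*} {M : ι → Type*} [Semiring R] [Finite ι]
    [DecidableEq ι] [∀ i, AddCommMonoid (M i)] [∀ i, Module R (M i)] (v : ∀ i, M i) :
    span R (Set.range fun i => Pi.single i (v i)) = pi Set.univ fun i => R ∙ v i := by
  simp_rw [span_range_eq_iSup, ← iSup_map_single, map_span, Set.image_singleton]
  rfl

noncomputable def Submodule.quotientPiEquiv {R ι : Type*} {M : ι → Type*} [Ring R]
    [∀ i, AddCommGroup (M i)] [∀ i, Module R (M i)] (p : ∀ i, Submodule R (M i)) :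
    ((∀ i, M i) ⧸ pi Set.univ p) ≃ₗ[R] ∀ i, M i ⧸ p i :=
  (quotEquivOfEq _ _ (by ext x; simp [mem_pi, funext_iff, Quotient.mk_eq_zero])).trans
    ((LinearMap.piMap fun i => (p i).mkQ).quotKerEquivOfSurjective
      (Function.Surjective.piMap fun i => (p i).mkQ_surjective))

theorem Ideal.exists_injective_quotient_of_torsionOf_eq {R M : Type*} [Ring R] [AddCommGroup M]
    [Module R M] {x : M} {I : Ideal R} (h : torsionOf R M x = I) :
    ∃ g : (R ⧸ I) →ₗ[R] M, Function.Injective g :=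
  let e := (Submodule.quotEquivOfEq _ _ h.symm).trans (quotTorsionOfEquivSpanSingleton R M x)
  ⟨(R ∙ x).subtype ∘ₗ e.toLinearMap, Subtype.val_injective.comp e.injective⟩

section RankCompHom

variable {A R : Type*} [DivisionRing A] [Ring R] (φ : A →+* R)

theorem LinearEquiv.rank_compHom_eq {M M' : Type v} [AddCommGroup M] [Module R M]
    [AddCommGroup M'] [Module R M'] (e : M ≃ₗ[R] M') :
    @Module.rank A M _ _ (Module.compHom M φ) = @Module.rank A M' _ _ (Module.compHom M' φ) :=
  letI := Module.compHom M φ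
  letI := Module.compHom M' φ
  LinearEquiv.rank_eq { e.toAddEquiv with map_smul' := fun a x => e.map_smul (φ a) x }

theorem rank_compHom_pi {ι : Type*} [Finite ι] (M : ι → Type*) [∀ i, AddCommGroup (M i)]
    [∀ i, Module R (M i)] :
    @Module.rank A (∀ i, M i) _ _ (Module.compHom _ φ) =
      Cardinal.sum fun i => @Module.rank A (M i) _ _ (Module.compHom (M i) φ) :=
  letI := fun i => Module.compHom (M i) φ
  rank_pi

theorem LinearMap.surjective_of_injective_of_rank_compHom_eq {M M' : Type*} [AddCommGroup M]
    [Module R M] [AddCommGroup M'] [Module R M'] {f : M →ₗ[R] M'} (hf : Function.Injective f)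
    {n : ℕ} (hM : @Module.rank A M _ _ (Module.compHom M φ) = n)
    (hM' : @Module.rank A M' _ _ (Module.compHom M' φ) = n) : Function.Surjective f := by
  let := Module.compHom M φ
  let := Module.compHom M' φ
  have := Module.finite_of_rank_eq_nat hM
  have := Module.finite_of_rank_eq_nat hM'
  let fA : M →ₗ[A] M' := { f.toAddMonoidHom with map_smul' := fun a x => f.map_smul (φ a) x }
  exact (LinearMap.injective_iff_surjective_of_finrank_eq_finrank (f := fA)
    (by rw [Module.finrank_eq_of_rank_eq hM, Module.finrank_eq_of_rank_eq hM'])).mp hf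

end RankCompHom

theorem cyclic_vector_jacobson_form_general
    {A R : Type*} [DivisionRing A] [Ring R] (φ : A →+* R) {r : ℕ}
    (deg : R → ℕ)
    (hdim : ∀ x : R, x ≠ 0 →
      @Module.rank A (R ⧸ Ideal.span {x}) _ _ (Module.compHom _ φ) = deg x)
    (m : Fin r → R) (hm : ∀ i, m i ≠ 0)
    (N : Submodule R (Fin r → R))
    (hN : N = Submodule.span R (Set.range fun i => Matrix.diagonal m i))
    (p : Fin r → R) (c : R) (hc : c ≠ 0)
    (hann : {f : R | f • (Submodule.Quotient.mk p : (Fin r → R) ⧸ N) = 0}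
        = ((Ideal.span {c} : Ideal R) : Set R))
    (hdegc : deg c = ∑ i, deg (m i)) :
    @Module.rank A ((Fin r → R) ⧸ N) _ _ (Module.compHom _ φ) = ∑ i, deg (m i) ∧
    Nonempty (((Fin r → R) ⧸ N) ≃ₗ[R] (R ⧸ Ideal.span {c})) := by
  have hNpi : N = Submodule.pi Set.univ fun i => Ideal.span {m i} := by
    rw [hN, ← Submodule.span_range_single]
    simp_rw [← Matrix.row_diagonal]
    rfl
  have hrank : @Module.rank A ((Fin r → R) ⧸ N) _ _ (Module.compHom _ φ) = ∑ i, deg (m i) := by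
    subst hNpi
    rw [(Submodule.quotientPiEquiv fun i => Ideal.span {m i}).rank_compHom_eq φ, rank_compHom_pi]
    simp_rw [hdim _ (hm _)]
    exact Cardinal.sum_natCast _
  refine ⟨hrank, ?_⟩
  obtain ⟨g, hg⟩ := Ideal.exists_injective_quotient_of_torsionOf_eq (SetLike.coe_injective hann)
  exact ⟨(LinearEquiv.ofBijective g ⟨hg, g.surjective_of_injective_of_rank_compHom_eq φ hg
    ((hdim c hc).trans (congrArg _ hdegc)) hrank⟩).symm⟩

/-- Let `R = A[∂;σ,δ]` be a simple Euclidean Ore domain over a division ring `A`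
(the `A`-vector space structure on left `R`-modules comes from the embedding `φ : A →+* R`;
`deg` is the `∂`-degree, and for nonzero `x ∈ R` the left module `R/Rx` has `A`-dimension
`deg x` -- hypothesis `hdim`).  Let `M = Diag(m₁,…,m_r)` with all `mᵢ ≠ 0` and
`Q = R^r / R^r·M` the quotient by the span `N` of the rows.  Then `dim_A Q = d = Σ deg mᵢ`.
Moreover, if `p ∈ R^{r×1}` and `c ∈ R` generates the left annihilator `{f : f·p̄ = 0}` of the
class of `p` in `Q`, and `deg c = d`, then `Q ≅ R/Rc`; i.e. `Diag(1,…,1,c)` is a Jacobson form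
of `M`. -/
theorem cyclic_vector_jacobson_form
    {A R : Type*} [DivisionRing A] [Ring R] [IsDomain R] (φ : A →+* R) {r : ℕ}
    (deg : R → ℕ)
    (hdim : ∀ x : R, x ≠ 0 →
      @Module.rank A (R ⧸ Ideal.span {x}) _ _ (Module.compHom _ φ) = deg x)
    (m : Fin r → R) (hm : ∀ i, m i ≠ 0)
    (N : Submodule R (Fin r → R))
    (hN : N = Submodule.span R (Set.range fun i => Matrix.diagonal m i))
    (p : Fin r → R) (c : R) (hc : c ≠ 0)
    (hann : {f : R | f • (Submodule.Quotient.mk p : (Fin r → R) ⧸ N) = 0}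
        = ((Ideal.span {c} : Ideal R) : Set R))
    (hdegc : deg c = ∑ i, deg (m i)) :
    @Module.rank A ((Fin r → R) ⧸ N) _ _ (Module.compHom _ φ) = ∑ i, deg (m i) ∧
    Nonempty (((Fin r → R) ⧸ N) ≃ₗ[R] (R ⧸ Ideal.span {c})) :=
  cyclic_vector_jacobson_form_general φ deg hdim m hm N hN p c hc hann hdegc
end

section
/- Over the first rational shift algebra R = K(x)⟨s | sx = (x+1)s⟩, the 2×2 diagonal matrix D_1 = Diag(s+x, s(s+x)) is equivalent (via R-invertible matrices U, V with U D_1 V = D) to Diag(1, s(s+x)(s+x−1)); in particular R²/R²D_1 is a cyclic R-module isomorphic to R/R·s(s+x)(s+x−1). -/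
/-!
With `w = s(s+x+1)`, take `U = [[1, 1], [w, w+x+2]]` and `V = [[s+1, -s(s+x)], [-1, s+x-1]]`.
Every entry of `U·D₁·V - Diag(x, (x+2)·s(s+x)(s+x-1))` is a two-sided combination of
`s·x - (x+1)·s`, hence vanishes. Both `U` and `V` factor into triangular and antidiagonal matrices
whose diagonal entries are among `1, -1, x+2, x-1`, units of `K(x)`, so they are invertible, and
rescaling the rows by `Diag(x⁻¹, (x+2)⁻¹)` yields `Diag(1, s(s+x)(s+x-1))`. Equivalent matrices
have isomorphic cokernels, and the cokernel of `Diag(1, d)` is `R/R·d`.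
-/

open Matrix Polynomial

namespace Matrix

variable {R : Type*} [Ring R]

theorem isUnit_fin_two_of_upper {a d : R} (ha : IsUnit a) (hd : IsUnit d) (b : R) :
    IsUnit !![a, b; 0, d] := by
  obtain ⟨a, rfl⟩ := ha
  obtain ⟨d, rfl⟩ := hd
  refine ⟨⟨_, !![↑a⁻¹, -(↑a⁻¹ * b * ↑d⁻¹); 0, ↑d⁻¹], ?_, ?_⟩, rfl⟩ <;>
    simp [one_fin_two, mul_assoc]

theorem isUnit_fin_two_of_lower {a d : R} (ha : IsUnit a) (hd : IsUnit d) (c : R) :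
    IsUnit !![a, 0; c, d] := by
  obtain ⟨a, rfl⟩ := ha
  obtain ⟨d, rfl⟩ := hd
  refine ⟨⟨_, !![↑a⁻¹, 0; -(↑d⁻¹ * c * ↑a⁻¹), ↑d⁻¹], ?_, ?_⟩, rfl⟩ <;>
    simp [one_fin_two, mul_assoc]

theorem isUnit_fin_two_of_antidiag {b c : R} (hb : IsUnit b) (hc : IsUnit c) :
    IsUnit !![0, b; c, 0] := by
  obtain ⟨b, rfl⟩ := hb
  obtain ⟨c, rfl⟩ := hc
  refine ⟨⟨_, !![0, ↑c⁻¹; ↑b⁻¹, 0], ?_, ?_⟩, rfl⟩ <;>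
    simp [one_fin_two]

theorem span_range_row_mul_of_isUnit {m n : Type*} [Fintype m] [DecidableEq m]
    {U : Matrix m m R} (hU : IsUnit U) (M : Matrix m n R) :
    Submodule.span R (Set.range (U * M).row) = Submodule.span R (Set.range M.row) := by
  obtain ⟨⟨U, U', -, hU'U⟩, rfl⟩ := hU
  have hsurj : LinearMap.range U.vecMulLinear = ⊤ :=
    LinearMap.range_eq_top.2 fun v => ⟨v ᵥ* U', by simp [vecMul_vecMul, hU'U]⟩
  have hcomp : (U * M).vecMulLinear = M.vecMulLinear ∘ₗ U.vecMulLinear :=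
    LinearMap.ext fun v => (vecMul_vecMul v U M).symm
  rw [← range_vecMulLinear, ← range_vecMulLinear, hcomp,
    LinearMap.range_comp_of_range_eq_top _ hsurj]

theorem map_span_range_row_toLinearEquivRight'OfInv {m n : Type*} [Fintype n] [DecidableEq n]
    {V V' : Matrix n n R} (hVV' : V * V' = 1) (hV'V : V' * V = 1) (M : Matrix m n R) :
    (Submodule.span R (Set.range M.row)).map
        (toLinearEquivRight'OfInv hV'V hVV' : (n → R) →ₗ[R] n → R)
      = Submodule.span R (Set.range (M * V).row) := by
  rw [Submodule.map_span, ← Set.range_comp]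
  rfl

theorem nonempty_quotient_span_range_row_equiv {m n : Type*} [Fintype m] [DecidableEq m]
    [Fintype n] [DecidableEq n] {U : Matrix m m R} {V : Matrix n n R} (hU : IsUnit U)
    (hV : IsUnit V) (M : Matrix m n R) :
    Nonempty (((n → R) ⧸ Submodule.span R (Set.range M.row)) ≃ₗ[R]
      (n → R) ⧸ Submodule.span R (Set.range (U * M * V).row)) := by
  obtain ⟨⟨V, V', hVV', hV'V⟩, rfl⟩ := hV
  rw [Matrix.mul_assoc, span_range_row_mul_of_isUnit hU]
  exact ⟨Submodule.Quotient.equiv _ _ _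
    (map_span_range_row_toLinearEquivRight'OfInv hVV' hV'V M)⟩

theorem nonempty_quotient_span_range_row_diag_one_equiv (d : R) :
    Nonempty (((Fin 2 → R) ⧸ Submodule.span R (Set.range (!![1, 0; 0, d] : Matrix _ _ R).row))
      ≃ₗ[R] R ⧸ Ideal.span {d}) := by
  let g : (Fin 2 → R) →ₗ[R] R ⧸ Ideal.span {d} := (Ideal.span {d}).mkQ ∘ₗ LinearMap.proj 1
  have hg : Function.Surjective g := fun y => by
    obtain ⟨r, rfl⟩ := Submodule.mkQ_surjective _ y
    exact ⟨![0, r], rfl⟩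
  have hker : LinearMap.ker g
      = Submodule.span R (Set.range (!![1, 0; 0, d] : Matrix _ _ R).row) := by
    apply le_antisymm
    · intro v hv
      obtain ⟨r, hr⟩ := Ideal.mem_span_singleton'.1 ((Submodule.Quotient.mk_eq_zero _).1 hv)
      have hv_eq : v = v 0 • ![1, 0] + r • ![0, d] := by
        ext i; fin_cases i <;> simp [hr]
      rw [hv_eq]
      exact add_mem (Submodule.smul_mem _ _ (Submodule.subset_span ⟨0, rfl⟩))
        (Submodule.smul_mem _ _ (Submodule.subset_span ⟨1, rfl⟩))
    · rw [Submodule.span_le]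
      rintro _ ⟨i, rfl⟩
      fin_cases i <;> simp [g]
  exact ⟨(Submodule.quotEquivOfEq _ _ hker.symm).trans (g.quotKerEquivOfSurjective hg)⟩

end Matrix

namespace ShiftAlgebra

variable {R : Type*} [Ring R]

theorem isUnit_map_algebraMap {K : Type*} [Field K] (φ : RatFunc K →+* R) {p : K[X]}
    (hp : p ≠ 0) : IsUnit (φ (algebraMap K[X] (RatFunc K) p)) :=
  (RatFunc.algebraMap_ne_zero hp).isUnit.map φ

def leftFactor (s x : R) : Matrix (Fin 2) (Fin 2) R :=
  !![1, 1; s * (s + x + 1), s * (s + x + 1) + (x + 2)]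

def rightFactor (s x : R) : Matrix (Fin 2) (Fin 2) R :=
  !![s + 1, -(s * (s + x)); -1, s + x - 1]

variable {s x : R}

theorem isUnit_leftFactor (hx : IsUnit (x + 2)) : IsUnit (leftFactor s x) := by
  have h : leftFactor s x = !![1, 0; s * (s + x + 1), 1] * !![1, 1; 0, x + 2] := by
    simp [leftFactor]
  rw [h]
  exact (isUnit_fin_two_of_lower isUnit_one isUnit_one _).mul
    (isUnit_fin_two_of_upper isUnit_one hx _)

theorem isUnit_rightFactor (hx : IsUnit (x - 1)) : IsUnit (rightFactor s x) := by
  have h : rightFactor s x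
      = !![1, -(s + 1); 0, 1] * !![0, x - 1; -1, 0] * !![1, -(s + x - 1); 0, 1] := by
    rw [rightFactor, mul_fin_two, mul_fin_two]
    congr 1
    simp only [vecCons_inj, and_true]
    refine ⟨⟨?_, ?_⟩, ?_, ?_⟩ <;> noncomm_ring
  rw [h]
  exact ((isUnit_fin_two_of_upper isUnit_one isUnit_one _).mul
    (isUnit_fin_two_of_antidiag hx isUnit_one.neg)).mul
    (isUnit_fin_two_of_upper isUnit_one isUnit_one _)

theorem leftFactor_mul_mul_rightFactor (hsx : s * x = (x + 1) * s) :
    leftFactor s x * !![s + x, 0; 0, s * (s + x)] * rightFactor s x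
      = !![x, 0; 0, (x + 2) * (s * (s + x) * (s + x - 1))] := by
  rw [leftFactor, rightFactor, mul_fin_two, mul_fin_two]
  congr 1
  simp only [vecCons_inj, and_true]
  refine ⟨⟨?_, ?_⟩, ?_, ?_⟩
  · linear_combination (norm := noncomm_ring) -hsx
  · linear_combination (norm := noncomm_ring) hsx * (s + x)
  · linear_combination (norm := noncomm_ring)
      s * hsx + hsx * (s + x) - s * (s + x + 1) * hsx
  · linear_combination (norm := noncomm_ring) s * (s + x + 1) * hsx * (s + x)

end ShiftAlgebra

open ShiftAlgebra

/-- Over the first rational shift algebra `R = K(x)⟨s | sx = (x+1)s⟩` (modelled as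
a ring `R` with an embedding `φ` of the rational function field `K(x)` and an element `s`
satisfying `s·g(x) = g(x+1)·s` for polynomials `g`), the diagonal matrix
`D₁ = Diag(s+x, s(s+x))` is equivalent via `R`-invertible matrices `U, V` (`U·D₁·V = D`) to
`Diag(1, s(s+x)(s+x−1))`; in particular `R²/R²D₁` is a cyclic `R`-module isomorphic to
`R/R·s(s+x)(s+x−1)`. -/
theorem shift_algebra_diag_jacobson_form
    {K R : Type*} [Field K] [Ring R]
    (φ : RatFunc K →+* R) (s : R)
    (hshift : ∀ f : Polynomial K,
      s * φ (algebraMap (Polynomial K) (RatFunc K) f)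
        = φ (algebraMap (Polynomial K) (RatFunc K) (f.comp (Polynomial.X + 1))) * s)
    (x : R) (hx : x = φ (algebraMap (Polynomial K) (RatFunc K) Polynomial.X))
    (D₁ : Matrix (Fin 2) (Fin 2) R)
    (hD₁ : D₁ = Matrix.of ![![s + x, 0], ![0, s * (s + x)]]) :
    (∃ U V : Matrix (Fin 2) (Fin 2) R, IsUnit U ∧ IsUnit V ∧
        U * D₁ * V = Matrix.of ![![(1 : R), 0], ![0, s * (s + x) * (s + x - 1)]]) ∧
    Nonempty
      (((Fin 2 → R) ⧸ Submodule.span R (Set.range fun i => D₁ i))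
        ≃ₗ[R] (R ⧸ Ideal.span {s * (s + x) * (s + x - 1)})) := by
  have hsx : s * x = (x + 1) * s := by simpa [hx] using hshift X
  have hx0 : IsUnit x := hx ▸ isUnit_map_algebraMap φ X_ne_zero
  have hx2 : IsUnit (x + 2) := by
    simpa [hx, map_ofNat] using isUnit_map_algebraMap φ (X_add_C_ne_zero (2 : K))
  have hx1 : IsUnit (x - 1) := by
    simpa [hx] using isUnit_map_algebraMap φ (X_sub_C_ne_zero (1 : K))
  set U := !![(↑hx0.unit⁻¹ : R), 0; 0, ↑hx2.unit⁻¹] * leftFactor s x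
  have hU : IsUnit U :=
    (isUnit_fin_two_of_upper (Units.isUnit _) (Units.isUnit _) 0).mul (isUnit_leftFactor hx2)
  have hV := isUnit_rightFactor (s := s) hx1
  have hUDV : U * D₁ * rightFactor s x = !![1, 0; 0, s * (s + x) * (s + x - 1)] := by
    rw [Matrix.mul_assoc, Matrix.mul_assoc, ← Matrix.mul_assoc (leftFactor s x), hD₁,
      leftFactor_mul_mul_rightFactor hsx]
    simp [← mul_assoc]
  refine ⟨⟨U, _, hU, hV, hUDV⟩, ?_⟩
  obtain ⟨e⟩ := nonempty_quotient_span_range_row_equiv hU hV D₁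
  obtain ⟨f⟩ := nonempty_quotient_span_range_row_diag_one_equiv (s * (s + x) * (s + x - 1))
  rw [hUDV] at e
  exact ⟨e.trans f⟩
end
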